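/- Let p be an odd prime, m ≥ 1, n = 2m, q = p^n. Let d_1 = s_1(p^m-1)+1, d_2 = s_2(p^m-1)+1 be Niho exponents. For a, b in F_q and λ in F_p^*, define T_2(a,b) = Σ_{x in F_q} ζ_p^{Tr(a x^{d_1} + b x^{d_2})} where ζ_p = e^{2πi/p} and Tr is the absolute trace F_q → F_p. Then for all λ in F_p^*, T_2(λa, λb) = (W(a,b) - 1) p^m, where W(a,b) is the number of u in S = {u in F_q : u * u^{p^m} = 1} satisfying b^{p^m} u^{2s_2-1} + a^{p^m} u^{s_1+s_2-1} + a u^{s_2-s_1} + b = 0. In particular T_2(λa, λb) is independent of λ in F_p^* and is an integer multiple of p^m minus p^m. -/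

import Mathlib

/-!
Write `Q = p^m` and `ψ(z) = ζ_p^{Tr z}`. The map `x ↦ x^(Q-1)` sends `F_q^*` onto the group `S` of
`(Q+1)`-th roots of unity, with the cosets `x₀ F_Q^*` as fibres, and on the fibre over `u` we have
`x^{dᵢ} = x u^{sᵢ}`. So the sum over that fibre is `Σ_{y ∈ F_Q^*} ψ(w y)` with
`w = λ x₀ (a u^{s₁} + b u^{s₂})`. Since `p` is odd, `y ↦ ψ(w y)` is trivial on `F_Q` exactly when
`w^Q + w = 0`, so this sum is `Q - 1` or `-1`; and `w^Q + w = λ x₀ u^{s₂} P(u⁻¹)`, where `P` is the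
Laurent polynomial counted by `W`. Adding `ψ(0) = 1` and summing over `S` (which `u ↦ u⁻¹`
permutes) gives `1 + Q·W - (Q + 1)`.
-/

noncomputable instance (p n : ℕ) [Fact p.Prime] : Fintype (GaloisField p n) :=
  Fintype.ofFinite _

open Finset Polynomial

section NthRoots

variable {F : Type*} [Field F]

theorem mem_insert_zero_nthRootsFinset_one [DecidableEq F] {n : ℕ} (hn : 0 < n) {y : F} :
    y ∈ insert 0 (nthRootsFinset n (1 : F)) ↔ y ^ (n + 1) = y := by
  rw [mem_insert, mem_nthRootsFinset hn, pow_succ]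
  constructor
  · rintro (rfl | h)
    · simp [hn.ne']
    · rw [h, one_mul]
  · intro h
    by_cases hy : y = 0
    · exact .inl hy
    · exact .inr (mul_right_cancel₀ hy (h.trans (one_mul y).symm))

variable [Fintype F]

theorem pow_pow_eq_self_of_card_eq_sq {Q : ℕ} (hF : Fintype.card F = Q ^ 2) (z : F) :
    (z ^ Q) ^ Q = z := by
  rw [← pow_mul, ← sq, ← hF, FiniteField.pow_card]

variable [DecidableEq F]

theorem filter_pow_eq_pow_eq_image_mul {n : ℕ} (hn : 0 < n) {x₀ : F} (hx₀ : x₀ ≠ 0) :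
    {x ∈ univ.erase (0 : F) | x ^ n = x₀ ^ n} =
      (nthRootsFinset n (1 : F)).image (x₀ * ·) := by
  ext x
  simp only [mem_filter, mem_erase, mem_univ, and_true, mem_image, mem_nthRootsFinset hn]
  constructor
  · rintro ⟨-, hx⟩
    refine ⟨x₀⁻¹ * x, ?_, by field_simp⟩
    rw [mul_pow, inv_pow, hx, inv_mul_cancel₀ (pow_ne_zero _ hx₀)]
  · rintro ⟨y, hy, rfl⟩
    have hy0 : y ≠ 0 := by rintro rfl; simp [hn.ne'] at hy
    exact ⟨mul_ne_zero hx₀ hy0, by rw [mul_pow, hy, mul_one]⟩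

theorem card_nthRootsFinset_one_of_dvd {n : ℕ} (h : n ∣ Fintype.card F - 1) :
    #(nthRootsFinset n (1 : F)) = n := by
  obtain ⟨g, hg⟩ := IsCyclic.exists_ofOrder_eq_natCard (α := Fˣ)
  rw [Nat.card_eq_fintype_card, Fintype.card_units] at hg
  have hg0 : orderOf g ≠ 0 := by
    rw [hg]; have := Fintype.one_lt_card (α := F); omega
  rw [← hg] at h
  have hprim := IsPrimitiveRoot.coe_units_iff.mpr (IsPrimitiveRoot.orderOf (g ^ (orderOf g / n)))
  rw [orderOf_pow_orderOf_div hg0 h] at hprim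
  exact hprim.card_nthRootsFinset

theorem image_pow_eq_nthRootsFinset {d e : ℕ} (hde : d * e = Fintype.card F - 1) :
    (univ.erase (0 : F)).image (· ^ d) = nthRootsFinset e (1 : F) := by
  have hF := Fintype.one_lt_card (α := F)
  have hd : 0 < d := Nat.pos_of_ne_zero (by rintro rfl; omega)
  have he : 0 < e := Nat.pos_of_ne_zero (by rintro rfl; omega)
  have hsub : (univ.erase (0 : F)).image (· ^ d) ⊆ nthRootsFinset e (1 : F) := by
    simp only [subset_iff, mem_image, mem_erase, mem_univ, and_true, mem_nthRootsFinset he]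
    rintro _ ⟨x, hx, rfl⟩
    rw [← pow_mul, hde]
    exact FiniteField.pow_card_sub_one_eq_one x hx
  refine eq_of_subset_of_card_le hsub ?_
  have hfibres :
      ∀ u ∈ (univ.erase (0 : F)).image (· ^ d), #{x ∈ univ.erase 0 | x ^ d = u} = d := by
    simp only [mem_image, mem_erase, mem_univ, and_true]
    rintro _ ⟨x₀, hx₀, rfl⟩
    rw [filter_pow_eq_pow_eq_image_mul hd hx₀,
      card_image_of_injective _ (mul_right_injective₀ hx₀),
      card_nthRootsFinset_one_of_dvd ⟨e, hde.symm⟩]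
  have hcount := card_eq_sum_card_image (· ^ d) (univ.erase (0 : F))
  rw [sum_congr rfl hfibres, sum_const, smul_eq_mul, card_erase_of_mem (mem_univ _), card_univ,
    ← hde] at hcount
  rw [card_nthRootsFinset_one_of_dvd ⟨d, by rw [← hde, mul_comm]⟩]
  exact (Nat.eq_of_mul_eq_mul_right hd ((mul_comm e d).trans hcount)).le

end NthRoots

section TraceCharacter

variable (p : ℕ) [Fact p.Prime] (F : Type*) [Field F] [Algebra (ZMod p) F]

noncomputable def traceChar : AddChar F ℂ :=
  ZMod.stdAddChar.compAddMonoidHom (Algebra.trace (ZMod p) F).toAddMonoidHom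

variable {p F}

theorem exp_pow_val_trace_eq_traceChar (z : F) :
    Complex.exp (2 * Real.pi * Complex.I / p) ^ (Algebra.trace (ZMod p) F z).val =
      traceChar p F z := by
  rw [traceChar, AddChar.compAddMonoidHom_apply, ZMod.stdAddChar_apply, ZMod.toCircle_apply,
    ← Complex.exp_nat_mul]
  congr 1
  simp only [LinearMap.toAddMonoidHom_coe]
  ring

theorem traceChar_eq_one_iff {z : F} : traceChar p F z = 1 ↔ Algebra.trace (ZMod p) F z = 0 := by
  rw [traceChar, AddChar.compAddMonoidHom_apply, ← (ZMod.stdAddChar (N := p)).map_zero_eq_one,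
    ZMod.injective_stdAddChar.eq_iff]
  rfl

theorem trace_pow_prime_pow [Finite F] (m : ℕ) (z : F) :
    Algebra.trace (ZMod p) F (z ^ p ^ m) = Algebra.trace (ZMod p) F z := by
  have := Algebra.trace_eq_of_algEquiv
    (FiniteField.frobeniusAlgEquivOfAlgebraic (ZMod p) F ^ m) z
  rwa [AlgEquiv.coe_pow, FiniteField.coe_frobeniusAlgEquivOfAlgebraic_iterate, ZMod.card] at this

theorem trace_eq_zero_of_pow_eq_neg [Finite F] (hp : p ≠ 2) {m : ℕ} {z : F}
    (hz : z ^ p ^ m = -z) : Algebra.trace (ZMod p) F z = 0 := by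
  have h2 : (2 : ZMod p) ≠ 0 := Ring.two_ne_zero (by rwa [ZMod.ringChar_zmod_n])
  have h : Algebra.trace (ZMod p) F z = - Algebra.trace (ZMod p) F z := by
    rw [← map_neg, ← hz, trace_pow_prime_pow]
  exact (mul_eq_zero.mp (by rw [two_mul]; nth_rewrite 1 [h]; ring)).resolve_left h2

variable [Fintype F] [CharP F p] (hp : p ≠ 2) {m : ℕ} (hF : Fintype.card F = (p ^ m) ^ 2)
include hp hF

theorem exists_pow_eq_self_trace_ne_zero :
    ∃ k : F, k ^ p ^ m = k ∧ Algebra.trace (ZMod p) F k ≠ 0 := by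
  have h2 : (2 : ZMod p) ≠ 0 := Ring.two_ne_zero (by rwa [ZMod.ringChar_zmod_n])
  obtain ⟨y, hy⟩ := Algebra.trace_surjective (ZMod p) F 1
  refine ⟨y + y ^ p ^ m, ?_, ?_⟩
  · rw [add_pow_char_pow, pow_pow_eq_self_of_card_eq_sq hF, add_comm]
  · rw [map_add, trace_pow_prime_pow, hy, ← two_mul, mul_one]
    exact h2

theorem forall_trace_mul_eq_zero_iff (w : F) :
    (∀ y : F, y ^ p ^ m = y → Algebra.trace (ZMod p) F (w * y) = 0) ↔ w ^ p ^ m + w = 0 := by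
  refine ⟨fun h => ?_, fun h y hy => trace_eq_zero_of_pow_eq_neg hp (m := m) ?_⟩
  · by_contra hv
    -- `v` lies in `F_Q`, so `y = k / v` does too, and `2 Tr (w y) = Tr (v y) = Tr k ≠ 0`.
    set v := w ^ p ^ m + w
    obtain ⟨k, hk, hktr⟩ := exists_pow_eq_self_trace_ne_zero hp hF
    have hv' : v ^ p ^ m = v := by
      rw [add_pow_char_pow, pow_pow_eq_self_of_card_eq_sq hF, add_comm]
    have hy : (k / v) ^ p ^ m = k / v := by rw [div_pow, hk, hv']
    have htwice : Algebra.trace (ZMod p) F k = 2 * Algebra.trace (ZMod p) F (w * (k / v)) := by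
      rw [two_mul]
      nth_rewrite 1 [← trace_pow_prime_pow (m := m) (w * (k / v))]
      rw [← map_add, mul_pow, hy, ← add_mul, mul_div_cancel₀ _ hv]
    exact hktr (by rw [htwice, h _ hy, mul_zero])
  · rw [mul_pow, hy, eq_neg_of_add_eq_zero_left h, neg_mul]

theorem sum_traceChar_mul_nthRootsFinset [DecidableEq F] (hm : 0 < m) (w : F) :
    ∑ y ∈ nthRootsFinset (p ^ m - 1) (1 : F), traceChar p F (w * y) =
      (if w ^ p ^ m + w = 0 then (p ^ m : ℂ) else 0) - 1 := by
  have hQ : 1 < p ^ m := Nat.one_lt_pow hm.ne' (Fact.out : p.Prime).one_lt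
  let K : Subfield F := (iterateFrobenius F p m).eqLocusField (RingHom.id F)
  let _ : Fintype K := Fintype.ofFinite K
  have hmem : ∀ y, y ∈ K ↔ y ^ p ^ m = y := fun y => by
    simp [K, RingHom.eqLocusField, iterateFrobenius_def]
  have h0 : (0 : F) ∉ nthRootsFinset (p ^ m - 1) (1 : F) := by
    rw [mem_nthRootsFinset (by omega), zero_pow (by omega)]
    exact zero_ne_one
  have hK : ∀ y, y ∈ insert 0 (nthRootsFinset (p ^ m - 1) (1 : F)) ↔ y ∈ K := fun y => by
    rw [mem_insert_zero_nthRootsFinset_one (by omega), Nat.sub_add_cancel hQ.le, hmem]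
  have hcard : Fintype.card K = p ^ m := by
    rw [Fintype.card_of_subtype _ hK, card_insert_of_notMem h0,
      card_nthRootsFinset_one_of_dvd
        ⟨p ^ m + 1, by rw [hF, mul_comm, ← Nat.sq_sub_sq, one_pow]⟩]
    omega
  let χ : AddChar K ℂ := ((traceChar p F).mulShift w).compAddMonoidHom K.subtype.toAddMonoidHom
  have hχ : χ = 0 ↔ w ^ p ^ m + w = 0 := by
    simp only [AddChar.eq_zero_iff, ← forall_trace_mul_eq_zero_iff hp hF, Subtype.forall, hmem,
      χ, AddChar.compAddMonoidHom_apply, AddChar.mulShift_apply, traceChar_eq_one_iff,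
      RingHom.toAddMonoidHom_eq_coe, AddMonoidHom.coe_coe, Subfield.subtype_apply]
  have hsum : ∑ y ∈ insert 0 (nthRootsFinset (p ^ m - 1) (1 : F)), traceChar p F (w * y) =
      ∑ y : K, χ y :=
    sum_subtype _ hK _
  rw [sum_insert h0, mul_zero, AddChar.map_zero_eq_one, add_comm] at hsum
  rw [eq_sub_iff_add_eq, hsum]
  exact (AddChar.sum_eq_ite χ).trans (by simp only [hχ, hcard, Nat.cast_pow])

end TraceCharacter

section Niho

variable {F : Type*} [Field F]

def nihoPoly (Q s1 s2 : ℕ) (a b u : F) : F :=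
  b ^ Q * u ^ (2 * (s2 : ℤ) - 1) + a ^ Q * u ^ ((s1 : ℤ) + (s2 : ℤ) - 1) +
    a * u ^ ((s2 : ℤ) - (s1 : ℤ)) + b

theorem natCard_nihoPoly_roots [Fintype F] [DecidableEq F] (Q s1 s2 : ℕ) (a b : F) :
    Nat.card {u : F // u * u ^ Q = 1 ∧ nihoPoly Q s1 s2 a b u = 0} =
      #{u ∈ nthRootsFinset (Q + 1) (1 : F) | nihoPoly Q s1 s2 a b u⁻¹ = 0} := by
  rw [Nat.card_eq_fintype_card, Fintype.card_subtype]
  refine card_nbij' (·⁻¹) (·⁻¹) ?_ ?_ (fun u _ => inv_inv u) (fun u _ => inv_inv u) <;>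
    intro u hu <;>
    simpa only [coe_filter, mem_univ, true_and, Set.mem_ofPred_eq,
      mem_nthRootsFinset Q.succ_pos, inv_inv, pow_succ', inv_pow, ← mul_inv, inv_eq_one] using hu

theorem pow_add_self_eq_mul_nihoPoly (p : ℕ) [Fact p.Prime] [CharP F p] {m : ℕ} {c x u : F}
    (a b : F) (s1 s2 : ℕ) (hu : u ≠ 0) (hc : c ^ p ^ m = c) (hx : x ^ p ^ m = x * u)
    (hu' : u ^ p ^ m = u⁻¹) :
    (c * x * (a * u ^ s1 + b * u ^ s2)) ^ p ^ m + c * x * (a * u ^ s1 + b * u ^ s2) =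
      c * x * u ^ (s2 : ℤ) * nihoPoly (p ^ m) s1 s2 a b u⁻¹ := by
  rw [mul_pow, mul_pow, hc, hx, add_pow_char_pow, mul_pow, mul_pow, ← pow_mul, ← pow_mul,
    mul_comm s1, mul_comm s2, pow_mul, pow_mul, hu']
  simp only [nihoPoly, inv_zpow', zpow_sub₀ hu, zpow_add₀ hu, zpow_neg, zpow_mul, zpow_natCast,
    zpow_one, inv_pow]
  field_simp
  ring

end Niho

section NihoSum

variable {p : ℕ} [Fact p.Prime] {F : Type*} [Field F] [Fintype F] [DecidableEq F]
  [Algebra (ZMod p) F] [CharP F p] (hp : p ≠ 2) {m : ℕ} (hF : Fintype.card F = (p ^ m) ^ 2)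
  (hm : 0 < m) {c : F} (hc : c ^ p ^ m = c) (hc0 : c ≠ 0) (a b : F) (s1 s2 : ℕ)
include hp hF hm hc hc0

theorem sum_traceChar_niho_fibre {x₀ : F} (hx₀ : x₀ ≠ 0) :
    ∑ y ∈ nthRootsFinset (p ^ m - 1) (1 : F),
        traceChar p F (c * a * (x₀ * y) ^ (s1 * (p ^ m - 1) + 1) +
          c * b * (x₀ * y) ^ (s2 * (p ^ m - 1) + 1)) =
      (if nihoPoly (p ^ m) s1 s2 a b (x₀ ^ (p ^ m - 1))⁻¹ = 0 then (p ^ m : ℂ) else 0) - 1 := by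
  have hQ : 1 < p ^ m := Nat.one_lt_pow hm.ne' (Fact.out : p.Prime).one_lt
  set u := x₀ ^ (p ^ m - 1) with hu_def
  have hu0 : u ≠ 0 := pow_ne_zero _ hx₀
  have hx : x₀ ^ p ^ m = x₀ * u := by
    rw [hu_def, ← pow_succ', Nat.sub_add_cancel hQ.le]
  have hu' : u ^ p ^ m = u⁻¹ := by
    refine eq_inv_of_mul_eq_one_left ?_
    rw [← pow_succ, hu_def, ← pow_mul, mul_comm, ← Nat.sq_sub_sq, one_pow, ← hF]
    exact FiniteField.pow_card_sub_one_eq_one x₀ hx₀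
  have hterm : ∀ y ∈ nthRootsFinset (p ^ m - 1) (1 : F),
      traceChar p F (c * a * (x₀ * y) ^ (s1 * (p ^ m - 1) + 1) +
        c * b * (x₀ * y) ^ (s2 * (p ^ m - 1) + 1)) =
      traceChar p F (c * x₀ * (a * u ^ s1 + b * u ^ s2) * y) := by
    intro y hy
    have hpow : ∀ s : ℕ, (x₀ * y) ^ (s * (p ^ m - 1) + 1) = x₀ * y * u ^ s := fun s => by
      rw [pow_succ, mul_comm s, pow_mul, mul_pow, (mem_nthRootsFinset (by omega) 1).mp hy,
        mul_one, mul_comm]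
    rw [hpow, hpow]
    ring_nf
  rw [sum_congr rfl hterm, sum_traceChar_mul_nthRootsFinset hp hF hm,
    pow_add_self_eq_mul_nihoPoly p a b s1 s2 hu0 hc hx hu']
  simp [hc0, hx₀, hu0]

theorem sum_traceChar_niho :
    ∑ x : F, traceChar p F
        (c * a * x ^ (s1 * (p ^ m - 1) + 1) + c * b * x ^ (s2 * (p ^ m - 1) + 1)) =
      (#{u ∈ nthRootsFinset (p ^ m + 1) (1 : F) | nihoPoly (p ^ m) s1 s2 a b u⁻¹ = 0} - 1 : ℂ) *
        p ^ m := by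
  have hQ : 1 < p ^ m := Nat.one_lt_pow hm.ne' (Fact.out : p.Prime).one_lt
  have himage := image_pow_eq_nthRootsFinset (F := F) (d := p ^ m - 1) (e := p ^ m + 1)
    (by rw [hF, mul_comm, ← Nat.sq_sub_sq, one_pow])
  have hfibre : ∀ u ∈ nthRootsFinset (p ^ m + 1) (1 : F),
      ∑ x ∈ univ.erase 0 with x ^ (p ^ m - 1) = u, traceChar p F
          (c * a * x ^ (s1 * (p ^ m - 1) + 1) + c * b * x ^ (s2 * (p ^ m - 1) + 1)) =
      (if nihoPoly (p ^ m) s1 s2 a b u⁻¹ = 0 then (p ^ m : ℂ) else 0) - 1 := by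
    intro u hu
    rw [← himage] at hu
    obtain ⟨x₀, hx₀, rfl⟩ := mem_image.mp hu
    have hx₀ : x₀ ≠ 0 := ne_of_mem_erase hx₀
    rw [filter_pow_eq_pow_eq_image_mul (by omega) hx₀,
      sum_image fun _ _ _ _ h => mul_left_cancel₀ hx₀ h,
      sum_traceChar_niho_fibre hp hF hm hc hc0 a b s1 s2 hx₀]
  rw [← add_sum_erase _ _ (mem_univ 0),
    ← sum_fiberwise_of_maps_to (fun x hx => himage ▸ mem_image_of_mem _ hx),
    sum_congr rfl hfibre, sum_sub_distrib, sum_ite, sum_const_zero, sum_const, sum_const,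
    card_nthRootsFinset_one_of_dvd ⟨p ^ m - 1, by rw [hF, ← Nat.sq_sub_sq, one_pow]⟩]
  simp only [zero_pow (Nat.succ_ne_zero _), mul_zero, add_zero, AddChar.map_zero_eq_one]
  ring

end NihoSum

/-- `p` an odd prime, `q = p^{2m}`, Niho exponents `dᵢ = sᵢ(p^m-1)+1`.
For `a, b ∈ F_q` and any `λ ∈ F_p^*`,
`T₂(λa, λb) = Σ_{x∈F_q} ζ_p^{Tr(λa x^{d₁} + λb x^{d₂})} = (W(a,b) - 1)·p^m`,
where `ζ_p = exp(2πi/p)`, `Tr` is the absolute trace, and `W(a,b)` is the number of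
`u ∈ S = {u : u·u^{p^m} = 1}` with
`b̄ u^{2s₂-1} + ā u^{s₁+s₂-1} + a u^{s₂-s₁} + b = 0` (`x̄ = x^{p^m}`, exponents of `u`
taken as integers, via inverses in `S` when negative).  In particular the value is
independent of `λ`. -/
theorem stmt_18 (p m s1 s2 : ℕ) [Fact p.Prime] (hp : Odd p) (hm : 0 < m)
    (a b : GaloisField p (2 * m)) (lam : ZMod p) (hlam : lam ≠ 0) :
    (∑ x : GaloisField p (2 * m),
        Complex.exp (2 * Real.pi * Complex.I / p) ^
          (Algebra.trace (ZMod p) (GaloisField p (2 * m))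
            (algebraMap (ZMod p) (GaloisField p (2 * m)) lam * a *
                x ^ (s1 * (p ^ m - 1) + 1) +
              algebraMap (ZMod p) (GaloisField p (2 * m)) lam * b *
                x ^ (s2 * (p ^ m - 1) + 1))).val) =
    ((Nat.card {u : GaloisField p (2 * m) // u * u ^ (p ^ m) = 1 ∧
        b ^ (p ^ m) * u ^ (2 * (s2 : ℤ) - 1) +
          a ^ (p ^ m) * u ^ ((s1 : ℤ) + (s2 : ℤ) - 1) +
          a * u ^ ((s2 : ℤ) - (s1 : ℤ)) + b = 0} : ℂ) - 1) * (p : ℂ) ^ m := by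
  classical
  have hp2 : p ≠ 2 := by rintro rfl; exact Nat.not_odd_iff_even.mpr even_two hp
  have hF : Fintype.card (GaloisField p (2 * m)) = (p ^ m) ^ 2 := by
    rw [← Nat.card_eq_fintype_card, GaloisField.card p _ (by omega), ← pow_mul, mul_comm]
  have hc : algebraMap (ZMod p) (GaloisField p (2 * m)) lam ^ p ^ m =
      algebraMap (ZMod p) (GaloisField p (2 * m)) lam := by
    rw [← map_pow, ZMod.pow_card_pow]
  have hcount := natCard_nihoPoly_roots (p ^ m) s1 s2 a b
  simp only [nihoPoly] at hcount
  simp_rw [exp_pow_val_trace_eq_traceChar]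
  rw [sum_traceChar_niho hp2 hF hm hc ((_root_.map_ne_zero _).mpr hlam), hcount]
  rfl
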